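/- arXiv:2507.14033 — 2 statements merged into one kernel-verified Lean document; each statement's English description precedes it below -/
import Mathlib

section
/- Let y ∈ D be a dominant element. Define L_D(y) ⊆ D by: L_D(θ(m,n)) = {θ^s(m−1,n), θ^s(m,n−1)} and L_D(θ^s(m,n)) = {θ(m,n), θ(m−1,n+1), θ(m+1,n−1)}, where any entry having a negative argument is omitted. Then the set of Bruhat cocovers of y is the disjoint union L(y) = {s1·y, s2·y} ⊎ L_D(y); in particular L(y) ∩ D = L_D(y). Moreover, L(s0·y) = s0·L(y) ⊎ {y}, where s0·L(y) = {s0·w : w ∈ L(y)}. -/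
/-!
Every alcove barycenter is `alcoveCenter p q e` with `p, q ∈ ℤ` and `e ∈ {1, 2}`, and the length
of `w` is the number of walls separating `wA₊` from `A₊`, which in these coordinates is
`|p + 1| + |q + 1| + |p + q + e|`. The reflections of `W` act on the plane exactly as the affine
reflections `s_{α,k}`, so the cocovers of `y` are the elements whose barycenter is the mirror
image of that of `y` in a wall and whose length is one less. For dominant `y` (`p, q ≥ 0`) these
integer constraints single out `{s₁y, s₂y} ⊎ L_D(y)`. Left multiplication by `s₀` matches the
cocovers of `s₀y` with the cocovers `u` of `y` together with the covers `u` of `y` such that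
`s₀u < u`; for dominant `y` every cocover `u` has `s₀u > u`, and the only such cover is `s₀y`.
-/

noncomputable section

open scoped RealInnerProductSpace

/-- The Bruhat strict order on a Coxeter group: the transitive closure of the relation
"multiply on the left by a reflection, increasing the length". -/
def bruhatLT {B : Type*} {W : Type*} [Group W] {M : CoxeterMatrix B}
    (cs : CoxeterSystem M W) : W → W → Prop :=
  Relation.TransGen (fun a b => (∃ t, cs.IsReflection t ∧ b = t * a) ∧ cs.length a < cs.length b)

/-- The Bruhat order on a Coxeter group. -/
def bruhatLE {B : Type*} {W : Type*} [Group W] {M : CoxeterMatrix B}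
    (cs : CoxeterSystem M W) (x y : W) : Prop :=
  x = y ∨ bruhatLT cs x y

/-- The Bruhat interval `[x, y]` as a set. -/
def Iset {B : Type*} {W : Type*} [Group W] {M : CoxeterMatrix B}
    (cs : CoxeterSystem M W) (x y : W) : Set W :=
  {z | bruhatLE cs x z ∧ bruhatLE cs z y}

/-- The Bruhat covers `U(x)` of an element `x`. -/
def Uset {B : Type*} {W : Type*} [Group W] {M : CoxeterMatrix B}
    (cs : CoxeterSystem M W) (x : W) : Set W :=
  {w | bruhatLT cs x w ∧ cs.length w = cs.length x + 1}

/-- The Bruhat cocovers `L(y)` of an element `y`. -/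
def Lset {B : Type*} {W : Type*} [Group W] {M : CoxeterMatrix B}
    (cs : CoxeterSystem M W) (y : W) : Set W :=
  {w | bruhatLT cs w y ∧ cs.length y = cs.length w + 1}

/-- An interval `[x, y]` is full if it contains all Bruhat covers of `x` and all
Bruhat cocovers of `y`. -/
def FullInt {B : Type*} {W : Type*} [Group W] {M : CoxeterMatrix B}
    (cs : CoxeterSystem M W) (x y : W) : Prop :=
  Uset cs x ⊆ Iset cs x y ∧ Lset cs y ⊆ Iset cs x y

/-- Two Bruhat intervals (possibly in different Coxeter groups) are isomorphic as posets. -/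
def IntervalIso {B : Type*} {W : Type*} {B' : Type*} {W' : Type*} [Group W] [Group W']
    {M : CoxeterMatrix B} {M' : CoxeterMatrix B'}
    (cs : CoxeterSystem M W) (cs' : CoxeterSystem M' W') (x y : W) (x' y' : W') : Prop :=
  ∃ f : {z : W // bruhatLE cs x z ∧ bruhatLE cs z y} ≃
        {z : W' // bruhatLE cs' x' z ∧ bruhatLE cs' z y'},
    ∀ u v, bruhatLE cs u.1 v.1 ↔ bruhatLE cs' (f u).1 (f v).1

/-- The group `G` of generic automorphisms: the subgroup of the permutation group of `W`
generated by the Dynkin diagram automorphisms `δ`, `σ` and inversion. -/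
def Gsub {W : Type*} [Group W] (dl sg : W ≃* W) : Subgroup (Equiv.Perm W) :=
  Subgroup.closure {dl.toEquiv, sg.toEquiv, Equiv.inv W}

/-- The Euclidean plane, with coordinates taken in the basis of simple roots of `A₂`. -/
abbrev E2 : Type := ℝ × ℝ

/-- The `A₂` inner product on the plane, in which `(αᵢ, αᵢ) = 2` and `(α₁, α₂) = -1`. -/
def B2 (u v : E2) : ℝ := 2*u.1*v.1 - u.1*v.2 - u.2*v.1 + 2*u.2*v.2

/-- The simple root `α₁`. -/
def a1 : E2 := (1, 0)
/-- The simple root `α₂`. -/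
def a2 : E2 := (0, 1)
/-- The fundamental weight `ϖ₁`, satisfying `(αᵢ, ϖⱼ) = δᵢⱼ`. -/
def fw1 : E2 := (2/3, 1/3)
/-- The fundamental weight `ϖ₂`. -/
def fw2 : E2 := (1/3, 2/3)
/-- `ρ = ϖ₁ + ϖ₂ = α₁ + α₂`. -/
def rho2 : E2 := (1, 1)

/-- The affine reflection `s_{α,k}` of the plane in the line `{v | (α, v) = k}`,
for a root `α` with `(α, α) = 2`. -/
def reflE (a : E2) (k : ℝ) (v : E2) : E2 := v - (B2 a v - k) • a

/-- The barycenter of the alcove of `z`, i.e. the image under the affine action of `z` of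
the barycenter `-ρ/3` of the fundamental alcove (whose vertices are `0, -ϖ₁, -ϖ₂`). -/
def cen {W : Type*} [Group W] (act : W →* Equiv.Perm E2) (z : W) : E2 :=
  act z ((-(1/3 : ℝ)) • rho2)

/-- The weight lattice `Λ = ℤϖ₁ ⊕ ℤϖ₂`. -/
def wLat : Set E2 := {v | ∃ a b : ℤ, v = (a : ℝ) • fw1 + (b : ℝ) • fw2}

/-- The fundamental alcove `A₊`. -/
def AlcoveFund : Set E2 :=
  {v | (-1 < B2 a1 v ∧ B2 a1 v < 0) ∧ (-1 < B2 a2 v ∧ B2 a2 v < 0) ∧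
    (-1 < B2 rho2 v ∧ B2 rho2 v < 0)}

/-- The zone `F_id` of the plane. -/
def Fid : Set E2 := {v | -1 ≤ B2 a1 v ∧ -1 ≤ B2 a2 v ∧ -1 ≤ B2 rho2 v}

/-- The cone `K` of nonnegative combinations of the simple roots. -/
def coneK : Set E2 := {v | ∃ a b : ℝ, 0 ≤ a ∧ 0 ≤ b ∧ v = a • a1 + b • a2}

/-- The set `D` of dominant elements, given functions `θ, θˢ` enumerating them. -/
def Dset {W : Type*} (th ths : ℕ → ℕ → W) : Set W :=
  {w | (∃ m n, w = th m n) ∨ (∃ m n, w = ths m n)}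

/-- The polygon `Pgn_{x,y} = F_id ∩ (cen x + K) ∩ (cen y - K)`. -/
def Pgn {W : Type*} [Group W] (act : W →* Equiv.Perm E2) (x y : W) : Set E2 :=
  {v ∈ Fid | (∃ k ∈ coneK, v = cen act x + k) ∧ (∃ k ∈ coneK, v = cen act y - k)}

/-- The element `x_k`: the product of the first `k` terms of `s₁, s₂, s₀, s₁, s₂, s₀, …`. -/
def xelt {W : Type*} [Group W] {M : CoxeterMatrix (Fin 3)} (cs : CoxeterSystem M W)
    (k : ℕ) : W :=
  ((List.range k).map (fun j => cs.simple (⟨(j + 1) % 3, Nat.mod_lt _ (by norm_num)⟩ : Fin 3))).prod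

/-- `zoneOf cs w v` says that `w` is one of the six elements of `W_f` and `v` lies in the
corresponding zone `F_w` of the plane. -/
def zoneOf {W : Type*} [Group W] {M : CoxeterMatrix (Fin 3)} (cs : CoxeterSystem M W)
    (w : W) (v : E2) : Prop :=
  (w = 1 ∧ v ∈ Fid) ∨
  (w = cs.simple 1 ∧ B2 a1 v ≤ -1 ∧ -1 ≤ B2 rho2 v) ∨
  (w = cs.simple 2 ∧ B2 a2 v ≤ -1 ∧ -1 ≤ B2 rho2 v) ∨
  (w = cs.simple 1 * cs.simple 2 ∧ B2 rho2 v ≤ -1 ∧ 0 ≤ B2 a2 v) ∨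
  (w = cs.simple 2 * cs.simple 1 ∧ B2 rho2 v ≤ -1 ∧ 0 ≤ B2 a1 v) ∨
  (w = cs.simple 1 * cs.simple 2 * cs.simple 1 ∧ B2 a1 v ≤ 0 ∧ B2 a2 v ≤ 0)

/-- Thickness of the interval `[x,y]`: `x + 2αᵢ` and `y - 2αᵢ` belong to `[x,y]` and their
barycenters lie in `F_id`, for `i = 1, 2`. -/
def Thick {W : Type*} [Group W] {M : CoxeterMatrix (Fin 3)} (cs : CoxeterSystem M W)
    (act : W →* Equiv.Perm E2) (Wadd : W → E2 → W) (x y : W) : Prop :=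
  Wadd x ((2 : ℝ) • a1) ∈ Iset cs x y ∧ Wadd x ((2 : ℝ) • a2) ∈ Iset cs x y ∧
  Wadd y (-((2 : ℝ) • a1)) ∈ Iset cs x y ∧ Wadd y (-((2 : ℝ) • a2)) ∈ Iset cs x y ∧
  cen act (Wadd x ((2 : ℝ) • a1)) ∈ Fid ∧ cen act (Wadd x ((2 : ℝ) • a2)) ∈ Fid ∧
  cen act (Wadd y (-((2 : ℝ) • a1))) ∈ Fid ∧ cen act (Wadd y (-((2 : ℝ) • a2))) ∈ Fid

theorem disjoint_and_inter_eq_of_eq_union {α : Type*} {L A B D : Set α} (hL : L = A ∪ B)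
    (hA : Disjoint A D) (hB : B ⊆ D) : Disjoint A B ∧ L ∩ D = B := by
  refine ⟨hA.mono_right hB, ?_⟩
  rw [hL, Set.union_inter_distrib_right, hA.inter_eq, Set.empty_union, Set.inter_eq_left.2 hB]

section Coxeter

variable {B W : Type*} [Group W] {M : CoxeterMatrix B} (cs : CoxeterSystem M W)

theorem bruhatLT.length_lt {x y : W} (h : bruhatLT cs x y) : cs.length x < cs.length y := by
  induction h with
  | single h => exact h.2
  | tail _ h ih => exact ih.trans h.2

theorem mem_Lset_iff {y w : W} :
    w ∈ Lset cs y ↔ (∃ t, cs.IsReflection t ∧ w = t * y) ∧ cs.length y = cs.length w + 1 := by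
  constructor
  · rintro ⟨hlt | ⟨hlt, hstep⟩, hlen⟩
    · obtain ⟨⟨t, ht, rfl⟩, -⟩ := hlt
      exact ⟨⟨t, ht, by rw [← mul_assoc, ht.mul_self, one_mul]⟩, hlen⟩
    · have := bruhatLT.length_lt cs hlt
      have := hstep.2
      omega
  · rintro ⟨⟨t, ht, rfl⟩, hlen⟩
    refine ⟨.single ⟨⟨t, ht, ?_⟩, by omega⟩, hlen⟩
    rw [← mul_assoc, ht.mul_self, one_mul]

theorem CoxeterSystem.length_eq_of_simple_mul {f : W → ℕ} (hone : f 1 = 0)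
    (hmul : ∀ i w, f (cs.simple i * w) ≤ f w + 1)
    (hdesc : ∀ w, w ≠ 1 → ∃ i, f (cs.simple i * w) < f w) (w : W) : cs.length w = f w := by
  apply le_antisymm
  · induction hw : f w using Nat.strong_induction_on generalizing w with
    | _ N ih =>
      by_cases h1 : w = 1
      · simp [h1]
      obtain ⟨i, hi⟩ := hdesc w h1
      calc cs.length w = cs.length (cs.simple i * (cs.simple i * w)) := by
            rw [cs.simple_mul_simple_cancel_left]
        _ ≤ cs.length (cs.simple i) + cs.length (cs.simple i * w) := cs.length_mul_le _ _
        _ ≤ 1 + f (cs.simple i * w) := by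
            rw [cs.length_simple]; exact Nat.add_le_add_left (ih _ (hw ▸ hi) _ rfl) 1
        _ ≤ N := by omega
  · obtain ⟨ω, hω, rfl⟩ := cs.exists_isReduced w
    rw [hω]
    clear hω
    induction ω with
    | nil => simp [hone]
    | cons i ω ih =>
      rw [cs.wordProd_cons, List.length_cons]
      exact (hmul i _).trans (by omega)

theorem Lset_simple_mul {i : B} {y : W} (hy : cs.length (cs.simple i * y) = cs.length y + 1)
    (hdown : ∀ u ∈ Lset cs y, cs.length (cs.simple i * u) = cs.length u + 1)
    (hup : ∀ u, y ∈ Lset cs u → cs.length (cs.simple i * u) < cs.length u →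
      u = cs.simple i * y) :
    Lset cs (cs.simple i * y) = (cs.simple i * ·) '' Lset cs y ∪ {y} := by
  ext w
  simp only [Set.mem_union, Set.mem_image, Set.mem_singleton_iff, mem_Lset_iff]
  constructor
  · rintro ⟨⟨t, ht, hw⟩, hlen⟩
    -- `s w = (s t s) y` is either a cocover of `y` or a cover of `y` with left descent `s`.
    have hrefl := ht.conj (cs.simple i)
    have hsw : cs.simple i * w = (cs.simple i * t * (cs.simple i)⁻¹) * y := by
      rw [hw, cs.inv_simple]; simp only [mul_assoc]
    rcases cs.length_simple_mul w i with hl | hl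
    · have hyu : y ∈ Lset cs (cs.simple i * w) := (mem_Lset_iff cs).2
        ⟨⟨_, hrefl, by rw [hsw, ← mul_assoc, hrefl.mul_self, one_mul]⟩, by omega⟩
      have hsw_eq := hup _ hyu (by rw [cs.simple_mul_simple_cancel_left]; omega)
      right
      rw [← cs.simple_mul_simple_cancel_left (w := w) i, hsw_eq, cs.simple_mul_simple_cancel_left]
    · exact Or.inl ⟨_, ⟨⟨_, hrefl, hsw⟩, by omega⟩, cs.simple_mul_simple_cancel_left i⟩
  · rintro (⟨u, ⟨⟨t, ht, rfl⟩, hlen⟩, rfl⟩ | rfl)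
    · refine ⟨⟨_, ht.conj (cs.simple i), ?_⟩, ?_⟩
      · rw [cs.inv_simple]; simp only [mul_assoc, cs.simple_mul_simple_cancel_left]
      · have := hdown (t * y) ((mem_Lset_iff cs).2 ⟨⟨t, ht, rfl⟩, hlen⟩)
        omega
    · exact ⟨⟨_, cs.isReflection_simple i, (cs.simple_mul_simple_cancel_left i).symm⟩, hy⟩

theorem notMem_image_Lset {i : B} {y : W}
    (hy : cs.length (cs.simple i * y) = cs.length y + 1) :
    y ∉ (cs.simple i * ·) '' Lset cs y := by
  rintro ⟨u, hu, hyu⟩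
  have hu' : u = cs.simple i * y := by rw [← hyu, cs.simple_mul_simple_cancel_left]
  have := ((mem_Lset_iff cs).1 hu).2
  rw [hu'] at this
  omega

end Coxeter

namespace AffineA2

/-- The point `v` with `(α₁, v) = p + e/3` and `(α₂, v) = q + e/3`. The barycenters of alcoves
are the points `alcoveCenter p q e` with `e = 1` (the alcoves `w₀A₊ + λ`) or `e = 2`
(the alcoves `A₊ + λ`). -/
def alcoveCenter (p q e : ℤ) : E2 :=
  (((2 * p + q + e : ℤ) : ℝ) / 3, ((p + 2 * q + e : ℤ) : ℝ) / 3)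

theorem alcoveCenter_inj {p q e p' q' e' : ℤ} (he : e = 1 ∨ e = 2) (he' : e' = 1 ∨ e' = 2)
    (h : alcoveCenter p q e = alcoveCenter p' q' e') : p = p' ∧ q = q' ∧ e = e' := by
  simp only [alcoveCenter, Prod.mk.injEq] at h
  have h₁ : 2 * p + q + e = 2 * p' + q' + e' := by
    exact_mod_cast (div_left_inj' three_ne_zero).1 h.1
  have h₂ : p + 2 * q + e = p' + 2 * q' + e' := by
    exact_mod_cast (div_left_inj' three_ne_zero).1 h.2
  omega

theorem alcoveCenter_add_smul (p q e a b : ℤ) :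
    alcoveCenter p q e + (a : ℝ) • fw1 + (b : ℝ) • fw2 = alcoveCenter (p + a) (q + b) e := by
  simp only [alcoveCenter, fw1, fw2, Prod.smul_mk, smul_eq_mul, Prod.mk_add_mk, Prod.mk.injEq]
  push_cast
  constructor <;> ring

theorem reflE_a1_alcoveCenter (k p q e : ℤ) :
    reflE a1 k (alcoveCenter p q e) =
      alcoveCenter (2 * k - p - 1) (p + q - k + e - 1) (3 - e) := by
  simp only [reflE, alcoveCenter, a1, B2, Prod.smul_mk, smul_eq_mul, Prod.mk_sub_mk,
    Prod.mk.injEq]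
  push_cast
  constructor <;> ring

theorem reflE_a2_alcoveCenter (k p q e : ℤ) :
    reflE a2 k (alcoveCenter p q e) =
      alcoveCenter (p + q - k + e - 1) (2 * k - q - 1) (3 - e) := by
  simp only [reflE, alcoveCenter, a2, B2, Prod.smul_mk, smul_eq_mul, Prod.mk_sub_mk,
    Prod.mk.injEq]
  push_cast
  constructor <;> ring

theorem reflE_rho2_alcoveCenter (k p q e : ℤ) :
    reflE rho2 k (alcoveCenter p q e) = alcoveCenter (k - q - 1) (k - p - 1) (3 - e) := by
  simp only [reflE, alcoveCenter, rho2, B2, Prod.smul_mk, smul_eq_mul, Prod.mk_sub_mk,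
    Prod.mk.injEq]
  push_cast
  constructor <;> ring

/-- For `v` off the walls, the number of walls `H_{α,k}` separating `v` from `A₊`. -/
def wallCount (v : E2) : ℕ := ⌈B2 a1 v⌉.natAbs + ⌈B2 a2 v⌉.natAbs + ⌈B2 rho2 v⌉.natAbs

theorem wallCount_alcoveCenter {p q e : ℤ} (he : e = 1 ∨ e = 2) :
    wallCount (alcoveCenter p q e) = (p + 1).natAbs + (q + 1).natAbs + (p + q + e).natAbs := by
  have ceil_eq (z : ℤ) (r : ℝ) (h₀ : 0 < r) (h₁ : r ≤ 1) : ⌈(z : ℝ) + r⌉ = z + 1 := by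
    rw [Int.ceil_eq_iff]; push_cast; constructor <;> linarith
  have h₁ : B2 a1 (alcoveCenter p q e) = p + e / 3 := by
    simp only [B2, a1, alcoveCenter]; push_cast; ring
  have h₂ : B2 a2 (alcoveCenter p q e) = q + e / 3 := by
    simp only [B2, a2, alcoveCenter]; push_cast; ring
  have h₃ : B2 rho2 (alcoveCenter p q e) = (p + q + e - 1 : ℤ) + (3 - e) / 3 := by
    simp only [B2, rho2, alcoveCenter]; push_cast; ring
  have he₁ : (1 : ℝ) ≤ e := by exact_mod_cast (show (1 : ℤ) ≤ e by omega)
  have he₂ : (e : ℝ) ≤ 2 := by exact_mod_cast (show e ≤ 2 by omega)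
  rw [wallCount, h₁, h₂, h₃, ceil_eq _ _ (by linarith) (by linarith),
    ceil_eq _ _ (by linarith) (by linarith), ceil_eq _ _ (by linarith) (by linarith)]
  congr 2
  omega

def IsWallReflection (f : E2 → E2) : Prop :=
  ∃ k : ℤ, f = reflE a1 k ∨ f = reflE a2 k ∨ f = reflE rho2 k

theorem IsWallReflection.conj {f r : E2 → E2} (hf : IsWallReflection f)
    (hr : r = reflE rho2 (-1) ∨ r = reflE a1 0 ∨ r = reflE a2 0) :
    IsWallReflection (r ∘ f ∘ r) := by
  rcases hf with ⟨k, rfl | rfl | rfl⟩ <;> rcases hr with rfl | rfl | rfl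
  on_goal 1 => refine ⟨-k - 1, .inr (.inl ?_)⟩
  on_goal 2 => refine ⟨-k, .inl ?_⟩
  on_goal 3 => refine ⟨k, .inr (.inr ?_)⟩
  on_goal 4 => refine ⟨-k - 1, .inl ?_⟩
  on_goal 5 => refine ⟨k, .inr (.inr ?_)⟩
  on_goal 6 => refine ⟨-k, .inr (.inl ?_)⟩
  on_goal 7 => refine ⟨-2 - k, .inr (.inr ?_)⟩
  on_goal 8 => refine ⟨k, .inr (.inl ?_)⟩
  on_goal 9 => refine ⟨k, .inl ?_⟩
  all_goals
    funext ⟨x, y⟩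
    simp only [Function.comp, reflE, B2, a1, a2, rho2, Prod.smul_mk, smul_eq_mul,
      Prod.mk_sub_mk, Prod.ext_iff]
    push_cast
    constructor <;> ring

theorem reflE_comp_reflE_comp_reflE {a : E2} (ha : B2 a a = 2) (j k : ℝ) :
    reflE a j ∘ reflE a k ∘ reflE a j = reflE a (2 * j - k) := by
  have hB (v : E2) (c : ℝ) : B2 a (v - c • a) = B2 a v - 2 * c := by
    rw [← ha]; simp only [B2, Prod.fst_sub, Prod.snd_sub, Prod.smul_fst, Prod.smul_snd,
      smul_eq_mul]; ring
  funext v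
  simp only [Function.comp, reflE, hB]
  module

/-- `alcoveCenter p' q' (3 - e)` is the mirror image of `alcoveCenter p q e` in a wall. -/
def IsWallImage (p q e p' q' : ℤ) : Prop :=
  ∃ k : ℤ, (p' = 2 * k - p - 1 ∧ q' = p + q - k + e - 1) ∨
    (p' = p + q - k + e - 1 ∧ q' = 2 * k - q - 1) ∨ (p' = k - q - 1 ∧ q' = k - p - 1)

theorem exists_isWallReflection_iff {p q e p' q' e' : ℤ} (he : e = 1 ∨ e = 2)
    (he' : e' = 1 ∨ e' = 2) :
    (∃ f, IsWallReflection f ∧ alcoveCenter p' q' e' = f (alcoveCenter p q e)) ↔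
      e' = 3 - e ∧ IsWallImage p q e p' q' := by
  constructor
  · rintro ⟨f, ⟨k, rfl | rfl | rfl⟩, h⟩
    · rw [reflE_a1_alcoveCenter] at h
      obtain ⟨rfl, rfl, rfl⟩ := alcoveCenter_inj he' (by omega) h
      exact ⟨rfl, k, .inl ⟨rfl, rfl⟩⟩
    · rw [reflE_a2_alcoveCenter] at h
      obtain ⟨rfl, rfl, rfl⟩ := alcoveCenter_inj he' (by omega) h
      exact ⟨rfl, k, .inr (.inl ⟨rfl, rfl⟩)⟩
    · rw [reflE_rho2_alcoveCenter] at h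
      obtain ⟨rfl, rfl, rfl⟩ := alcoveCenter_inj he' (by omega) h
      exact ⟨rfl, k, .inr (.inr ⟨rfl, rfl⟩)⟩
  · rintro ⟨rfl, k, ⟨rfl, rfl⟩ | ⟨rfl, rfl⟩ | ⟨rfl, rfl⟩⟩
    · exact ⟨_, ⟨k, .inl rfl⟩, (reflE_a1_alcoveCenter ..).symm⟩
    · exact ⟨_, ⟨k, .inr (.inl rfl)⟩, (reflE_a2_alcoveCenter ..).symm⟩
    · exact ⟨_, ⟨k, .inr (.inr rfl)⟩, (reflE_rho2_alcoveCenter ..).symm⟩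

structure IsStandardAction {W : Type*} [Group W] {M : CoxeterMatrix (Fin 3)}
    (cs : CoxeterSystem M W) (act : W →* Equiv.Perm E2) : Prop where
  act_simple_zero : ⇑(act (cs.simple 0)) = reflE rho2 (-1)
  act_simple_one : ⇑(act (cs.simple 1)) = reflE a1 0
  act_simple_two : ⇑(act (cs.simple 2)) = reflE a2 0

section Action

variable {W : Type*} [Group W] {M : CoxeterMatrix (Fin 3)} {cs : CoxeterSystem M W}
  {act : W →* Equiv.Perm E2}

theorem cen_mul (x z : W) : cen act (x * z) = act x (cen act z) := by
  simp [cen, map_mul]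

theorem cen_one : cen act 1 = alcoveCenter (-1) (-1) 2 := by
  simp only [cen, map_one, Equiv.Perm.coe_one, id_eq, alcoveCenter, rho2, Prod.smul_mk,
    smul_eq_mul, Prod.mk.injEq]
  norm_num

theorem coe_act_mul_mul (x y z : W) : ⇑(act (x * y * z)) = act x ∘ act y ∘ act z := by
  rw [map_mul, map_mul, Equiv.Perm.coe_mul, Equiv.Perm.coe_mul]; rfl

theorem exists_isReflection_act_eq_reflE {a : E2} (ha : B2 a a = 2) {t₀ t₁ : W}
    (h₀ : cs.IsReflection t₀) (h₁ : cs.IsReflection t₁) (ht₀ : ⇑(act t₀) = reflE a (-1))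
    (ht₁ : ⇑(act t₁) = reflE a 0) (k : ℤ) : ∃ t, cs.IsReflection t ∧ ⇑(act t) = reflE a k := by
  -- Conjugating one of two adjacent parallel walls by the other moves the pair by one step.
  suffices ∀ k : ℤ, ∃ t t', cs.IsReflection t ∧ cs.IsReflection t' ∧
      ⇑(act t) = reflE a (k - 1) ∧ ⇑(act t') = reflE a k by
    obtain ⟨-, t, -, ht, -, hact⟩ := this k
    exact ⟨t, ht, hact⟩
  intro k
  induction k using Int.induction_on with
  | zero => exact ⟨t₀, t₁, h₀, h₁, by simpa using ht₀, by simpa using ht₁⟩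
  | succ k ih =>
    obtain ⟨t, t', ht, ht', hact, hact'⟩ := ih
    refine ⟨t', t' * t * t'⁻¹, ht', ht.conj t', by simpa using hact', ?_⟩
    rw [ht'.inv, coe_act_mul_mul, hact, hact', reflE_comp_reflE_comp_reflE ha]
    congr 1; push_cast; ring
  | pred k ih =>
    obtain ⟨t, t', ht, ht', hact, hact'⟩ := ih
    refine ⟨t * t' * t⁻¹, t, ht'.conj t, ht, ?_, by simpa using hact⟩
    rw [ht.inv, coe_act_mul_mul, hact, hact', reflE_comp_reflE_comp_reflE ha]
    congr 1; push_cast; ring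

theorem eq_iff_of_cen_eq (hcen : Function.Injective (cen act)) {w x : W} {p q e p' q' e' : ℤ}
    (hw : cen act w = alcoveCenter p q e) (he : e = 1 ∨ e = 2)
    (hx : cen act x = alcoveCenter p' q' e') (he' : e' = 1 ∨ e' = 2) :
    w = x ↔ p = p' ∧ q = q' ∧ e = e' := by
  constructor
  · rintro rfl
    exact alcoveCenter_inj he he' (hw.symm.trans hx)
  · rintro ⟨rfl, rfl, rfl⟩
    exact hcen (hw.trans hx.symm)

namespace IsStandardAction

variable (hA : IsStandardAction cs act)
include hA

theorem cen_simple_zero_mul {z : W} {p q e : ℤ} (hz : cen act z = alcoveCenter p q e) :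
    cen act (cs.simple 0 * z) = alcoveCenter (-q - 2) (-p - 2) (3 - e) := by
  rw [cen_mul, hz, hA.act_simple_zero]
  convert reflE_rho2_alcoveCenter (-1) p q e using 2 <;> push_cast <;> ring

theorem cen_simple_one_mul {z : W} {p q e : ℤ} (hz : cen act z = alcoveCenter p q e) :
    cen act (cs.simple 1 * z) = alcoveCenter (-p - 1) (p + q + e - 1) (3 - e) := by
  rw [cen_mul, hz, hA.act_simple_one]
  convert reflE_a1_alcoveCenter 0 p q e using 2 <;> push_cast <;> ring

theorem cen_simple_two_mul {z : W} {p q e : ℤ} (hz : cen act z = alcoveCenter p q e) :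
    cen act (cs.simple 2 * z) = alcoveCenter (p + q + e - 1) (-q - 1) (3 - e) := by
  rw [cen_mul, hz, hA.act_simple_two]
  convert reflE_a2_alcoveCenter 0 p q e using 2 <;> push_cast <;> ring

theorem exists_cen_eq (z : W) :
    ∃ p q e : ℤ, (e = 1 ∨ e = 2) ∧ cen act z = alcoveCenter p q e := by
  induction z using cs.simple_induction_left with
  | one => exact ⟨-1, -1, 2, .inr rfl, cen_one⟩
  | mul_simple_left z i ih =>
    obtain ⟨p, q, e, he, hz⟩ := ih
    fin_cases i
    · exact ⟨_, _, _, by omega, hA.cen_simple_zero_mul hz⟩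
    · exact ⟨_, _, _, by omega, hA.cen_simple_one_mul hz⟩
    · exact ⟨_, _, _, by omega, hA.cen_simple_two_mul hz⟩

theorem length_eq_wallCount (hcen : Function.Injective (cen act)) (z : W) :
    cs.length z = wallCount (cen act z) := by
  refine cs.length_eq_of_simple_mul (f := fun z => wallCount (cen act z)) ?_ (fun i w => ?_)
    (fun w hw => ?_) z
  · rw [cen_one, wallCount_alcoveCenter (.inr rfl)]; rfl
  · obtain ⟨p, q, e, he, hw⟩ := hA.exists_cen_eq w
    match i with
    | 0 => rw [hA.cen_simple_zero_mul hw, hw, wallCount_alcoveCenter he,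
        wallCount_alcoveCenter (by omega)]; omega
    | 1 => rw [hA.cen_simple_one_mul hw, hw, wallCount_alcoveCenter he,
        wallCount_alcoveCenter (by omega)]; omega
    | 2 => rw [hA.cen_simple_two_mul hw, hw, wallCount_alcoveCenter he,
        wallCount_alcoveCenter (by omega)]; omega
  · obtain ⟨p, q, e, he, hcw⟩ := hA.exists_cen_eq w
    have hdesc : p + q + e < 0 ∨ 0 ≤ p ∨ 0 ≤ q := by
      by_contra! h
      exact hw (hcen (by rw [hcw, cen_one]; congr <;> omega))
    rcases hdesc with h | h | h
    · refine ⟨0, ?_⟩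
      rw [hA.cen_simple_zero_mul hcw, hcw, wallCount_alcoveCenter he,
        wallCount_alcoveCenter (by omega)]; omega
    · refine ⟨1, ?_⟩
      rw [hA.cen_simple_one_mul hcw, hcw, wallCount_alcoveCenter he,
        wallCount_alcoveCenter (by omega)]; omega
    · refine ⟨2, ?_⟩
      rw [hA.cen_simple_two_mul hcw, hcw, wallCount_alcoveCenter he,
        wallCount_alcoveCenter (by omega)]; omega

theorem length_eq {z : W} {p q e : ℤ} (hcen : Function.Injective (cen act))
    (hz : cen act z = alcoveCenter p q e) (he : e = 1 ∨ e = 2) :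
    cs.length z = (p + 1).natAbs + (q + 1).natAbs + (p + q + e).natAbs := by
  rw [hA.length_eq_wallCount hcen, hz, wallCount_alcoveCenter he]

theorem act_simple_eq (i : Fin 3) : ⇑(act (cs.simple i)) = reflE rho2 (-1) ∨
    ⇑(act (cs.simple i)) = reflE a1 0 ∨ ⇑(act (cs.simple i)) = reflE a2 0 :=
  match i with
  | 0 => .inl hA.act_simple_zero
  | 1 => .inr (.inl hA.act_simple_one)
  | 2 => .inr (.inr hA.act_simple_two)

theorem isWallReflection_act {t : W} (ht : cs.IsReflection t) : IsWallReflection (act t) := by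
  obtain ⟨w, i, rfl⟩ := ht
  induction w using cs.simple_induction_left with
  | one =>
    simp only [one_mul, inv_one, mul_one]
    rcases hA.act_simple_eq i with h | h | h
    · exact ⟨-1, .inr (.inr (by rw [h]; norm_num))⟩
    · exact ⟨0, .inl (by rw [h]; norm_num)⟩
    · exact ⟨0, .inr (.inl (by rw [h]; norm_num))⟩
  | mul_simple_left w j ih =>
    have : cs.simple j * w * cs.simple i * (cs.simple j * w)⁻¹ =
        cs.simple j * (w * cs.simple i * w⁻¹) * cs.simple j := by
      rw [mul_inv_rev, cs.inv_simple]; group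
    rw [this, coe_act_mul_mul]
    exact ih.conj (hA.act_simple_eq j)

theorem exists_isReflection_act_eq {f : E2 → E2} (hf : IsWallReflection f) :
    ∃ t, cs.IsReflection t ∧ ⇑(act t) = f := by
  have isReflection_conj (i j : Fin 3) :
      cs.IsReflection (cs.simple i * cs.simple j * cs.simple i) := by
    simpa using (cs.isReflection_simple j).conj (cs.simple i)
  obtain ⟨k, rfl | rfl | rfl⟩ := hf
  on_goal 1 =>
    refine exists_isReflection_act_eq_reflE (by norm_num [B2, a1])
      (isReflection_conj 2 0) (cs.isReflection_simple 1) ?_ (by simpa using hA.act_simple_one) k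
  on_goal 2 =>
    refine exists_isReflection_act_eq_reflE (by norm_num [B2, a2])
      (isReflection_conj 1 0) (cs.isReflection_simple 2) ?_ (by simpa using hA.act_simple_two) k
  on_goal 3 =>
    refine exists_isReflection_act_eq_reflE (by norm_num [B2, rho2])
      (cs.isReflection_simple 0) (isReflection_conj 1 2) hA.act_simple_zero ?_ k
  all_goals
    simp only [coe_act_mul_mul, hA.act_simple_zero, hA.act_simple_one, hA.act_simple_two]
    funext ⟨x, y⟩
    simp only [Function.comp, reflE, B2, a1, a2, rho2, Prod.smul_mk, smul_eq_mul,
      Prod.mk_sub_mk, Prod.mk.injEq]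
    constructor <;> ring

theorem mem_Lset_iff_cen (hcen : Function.Injective (cen act)) {y w : W} :
    w ∈ Lset cs y ↔ (∃ f, IsWallReflection f ∧ cen act w = f (cen act y)) ∧
      cs.length y = cs.length w + 1 := by
  rw [mem_Lset_iff]
  refine and_congr_left' ⟨?_, ?_⟩
  · rintro ⟨t, ht, rfl⟩
    exact ⟨_, hA.isWallReflection_act ht, cen_mul t y⟩
  · rintro ⟨f, hf, hw⟩
    obtain ⟨t, ht, rfl⟩ := hA.exists_isReflection_act_eq hf
    exact ⟨t, ht, hcen (hw.trans (cen_mul t y).symm)⟩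

theorem mem_Lset_iff_of_cen_eq (hcen : Function.Injective (cen act)) {y w : W}
    {p q e p' q' e' : ℤ} (hy : cen act y = alcoveCenter p q e) (he : e = 1 ∨ e = 2)
    (hw : cen act w = alcoveCenter p' q' e') (he' : e' = 1 ∨ e' = 2) :
    w ∈ Lset cs y ↔ (e' = 3 - e ∧ IsWallImage p q e p' q') ∧
      (p + 1).natAbs + (q + 1).natAbs + (p + q + e).natAbs =
        (p' + 1).natAbs + (q' + 1).natAbs + (p' + q' + e').natAbs + 1 := by
  rw [hA.mem_Lset_iff_cen hcen, hy, hw, exists_isWallReflection_iff he he',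
    hA.length_eq hcen hy he, hA.length_eq hcen hw he']

theorem length_simple_zero_mul (hcen : Function.Injective (cen act)) {y : W} {p q e : ℤ}
    (hy : cen act y = alcoveCenter p q e) (he : e = 1 ∨ e = 2) (hpq : 0 ≤ p + q + e) :
    cs.length (cs.simple 0 * y) = cs.length y + 1 := by
  rw [hA.length_eq hcen (hA.cen_simple_zero_mul hy) (by omega), hA.length_eq hcen hy he]
  omega

theorem Lset_simple_zero_mul (hcen : Function.Injective (cen act)) {y : W} {p q e : ℤ}
    (hy : cen act y = alcoveCenter p q e) (he : e = 1 ∨ e = 2) (hp : 0 ≤ p) (hq : 0 ≤ q) :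
    Lset cs (cs.simple 0 * y) = (cs.simple 0 * ·) '' Lset cs y ∪ {y} := by
  refine Lset_simple_mul cs (hA.length_simple_zero_mul hcen hy he (by omega))
    (fun u hu => ?_) (fun u hyu hlt => ?_)
  · obtain ⟨p', q', e', he', hu'⟩ := hA.exists_cen_eq u
    obtain ⟨⟨rfl, k, hk⟩, hl⟩ := (hA.mem_Lset_iff_of_cen_eq hcen hy he hu' he').1 hu
    rw [hA.length_eq hcen (hA.cen_simple_zero_mul hu') (by omega), hA.length_eq hcen hu' he']
    rcases hk with hk | hk | hk <;> omega
  · obtain ⟨p', q', e', he', hu'⟩ := hA.exists_cen_eq u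
    obtain ⟨⟨rfl, k, hk⟩, hl⟩ := (hA.mem_Lset_iff_of_cen_eq hcen hu' he' hy he).1 hyu
    rw [hA.length_eq hcen (hA.cen_simple_zero_mul hu') (by omega), hA.length_eq hcen hu' he']
      at hlt
    rw [eq_iff_of_cen_eq hcen hu' he' (hA.cen_simple_zero_mul hy) (by omega)]
    rcases hk with hk | hk | hk <;> omega

end IsStandardAction

theorem cen_ths {ths : ℕ → ℕ → W} (hths : ∀ m n : ℕ, cen act (ths m n) =
      cen act 1 + ((m : ℝ) + 1) • fw1 + ((n : ℝ) + 1) • fw2)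
    (m n : ℕ) : cen act (ths m n) = alcoveCenter m n 2 := by
  have := alcoveCenter_add_smul (-1) (-1) 2 (m + 1) (n + 1)
  push_cast at this
  rw [hths, cen_one, this]
  congr 1 <;> ring

theorem nonneg_of_mem_Dset {th ths : ℕ → ℕ → W}
    (hth : ∀ m n : ℕ, cen act (th m n) = alcoveCenter m n 1)
    (hths : ∀ m n : ℕ, cen act (ths m n) = alcoveCenter m n 2) {w : W} {p q e : ℤ}
    (hw : cen act w = alcoveCenter p q e) (he : e = 1 ∨ e = 2) (hD : w ∈ Dset th ths) :
    0 ≤ p ∧ 0 ≤ q := by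
  rcases hD with ⟨a, b, rfl⟩ | ⟨a, b, rfl⟩
  · have := alcoveCenter_inj he (.inl rfl) (hw.symm.trans (hth a b))
    omega
  · have := alcoveCenter_inj he (.inr rfl) (hw.symm.trans (hths a b))
    omega

namespace IsStandardAction

variable (hA : IsStandardAction cs act)
include hA

theorem cen_th {th : ℕ → ℕ → W} (hth : ∀ m n : ℕ, cen act (th m n) =
      cen act (cs.simple 1 * cs.simple 2 * cs.simple 1) + (m : ℝ) • fw1 + (n : ℝ) • fw2)
    (m n : ℕ) : cen act (th m n) = alcoveCenter m n 1 := by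
  have hw₀ := hA.cen_simple_one_mul (hA.cen_simple_two_mul (hA.cen_simple_one_mul cen_one))
  have := alcoveCenter_add_smul 0 0 1 m n
  push_cast at this
  rw [mul_one, ← mul_assoc] at hw₀
  rw [hth, hw₀]
  norm_num [this]

theorem Lset_th (hcen : Function.Injective (cen act)) {th ths : ℕ → ℕ → W}
    (hth : ∀ m n : ℕ, cen act (th m n) = alcoveCenter m n 1)
    (hths : ∀ m n : ℕ, cen act (ths m n) = alcoveCenter m n 2) (m n : ℕ) :
    Lset cs (th m n) = ({cs.simple 1 * th m n, cs.simple 2 * th m n} : Set W) ∪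
      {w | (∃ m', m = m' + 1 ∧ w = ths m' n) ∨ (∃ n', n = n' + 1 ∧ w = ths m n')} := by
  have hy := hth m n
  ext w
  obtain ⟨p, q, e, he, hw⟩ := hA.exists_cen_eq w
  have hths_iff (a b : ℕ) : w = ths a b ↔ p = a ∧ q = b ∧ e = 2 :=
    eq_iff_of_cen_eq hcen hw he (hths a b) (.inr rfl)
  simp only [Set.mem_union, Set.mem_insert_iff, Set.mem_singleton_iff, Set.mem_ofPred_eq,
    hths_iff, hA.mem_Lset_iff_of_cen_eq hcen hy (.inl rfl) hw he,
    eq_iff_of_cen_eq hcen hw he (hA.cen_simple_one_mul hy) (by norm_num),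
    eq_iff_of_cen_eq hcen hw he (hA.cen_simple_two_mul hy) (by norm_num)]
  constructor
  · rintro ⟨⟨rfl, k, ⟨rfl, rfl⟩ | ⟨rfl, rfl⟩ | ⟨rfl, rfl⟩⟩, hl⟩
    · obtain rfl | ⟨rfl, hm⟩ : k = 0 ∨ (k = m ∧ 0 < m) := by omega
      · exact .inl (.inl (by omega))
      · exact .inr (.inl ⟨m - 1, by omega, by omega⟩)
    · obtain rfl | ⟨rfl, hn⟩ : k = 0 ∨ (k = n ∧ 0 < n) := by omega
      · exact .inl (.inr (by omega))
      · exact .inr (.inr ⟨n - 1, by omega, by omega⟩)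
    · omega
  · rintro ((⟨rfl, rfl, rfl⟩ | ⟨rfl, rfl, rfl⟩) | ⟨m', rfl, rfl, rfl, rfl⟩ |
      ⟨n', rfl, rfl, rfl, rfl⟩)
    · exact ⟨⟨rfl, 0, .inl (by omega)⟩, by omega⟩
    · exact ⟨⟨rfl, 0, .inr (.inl (by omega))⟩, by omega⟩
    · exact ⟨⟨rfl, m' + 1, .inl (by omega)⟩, by omega⟩
    · exact ⟨⟨rfl, n' + 1, .inr (.inl (by omega))⟩, by omega⟩

theorem Lset_ths (hcen : Function.Injective (cen act)) {th ths : ℕ → ℕ → W}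
    (hth : ∀ m n : ℕ, cen act (th m n) = alcoveCenter m n 1)
    (hths : ∀ m n : ℕ, cen act (ths m n) = alcoveCenter m n 2) (m n : ℕ) :
    Lset cs (ths m n) = ({cs.simple 1 * ths m n, cs.simple 2 * ths m n} : Set W) ∪
      {w | w = th m n ∨ (∃ m', m = m' + 1 ∧ w = th m' (n + 1)) ∨
        (∃ n', n = n' + 1 ∧ w = th (m + 1) n')} := by
  have hy := hths m n
  ext w
  obtain ⟨p, q, e, he, hw⟩ := hA.exists_cen_eq w
  have hth_iff (a b : ℕ) : w = th a b ↔ p = a ∧ q = b ∧ e = 1 :=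
    eq_iff_of_cen_eq hcen hw he (hth a b) (.inl rfl)
  simp only [Set.mem_union, Set.mem_insert_iff, Set.mem_singleton_iff, Set.mem_ofPred_eq,
    hth_iff, hA.mem_Lset_iff_of_cen_eq hcen hy (.inr rfl) hw he,
    eq_iff_of_cen_eq hcen hw he (hA.cen_simple_one_mul hy) (by norm_num),
    eq_iff_of_cen_eq hcen hw he (hA.cen_simple_two_mul hy) (by norm_num)]
  constructor
  · rintro ⟨⟨rfl, k, ⟨rfl, rfl⟩ | ⟨rfl, rfl⟩ | ⟨rfl, rfl⟩⟩, hl⟩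
    · obtain rfl | ⟨rfl, hm⟩ : k = 0 ∨ (k = m ∧ 0 < m) := by omega
      · exact .inl (.inl (by omega))
      · exact .inr (.inr (.inl ⟨m - 1, by omega, by omega⟩))
    · obtain rfl | ⟨rfl, hn⟩ : k = 0 ∨ (k = n ∧ 0 < n) := by omega
      · exact .inl (.inr (by omega))
      · exact .inr (.inr (.inr ⟨n - 1, by omega, by omega⟩))
    · obtain rfl : k = m + n + 1 := by omega
      exact .inr (.inl (by omega))
  · rintro ((⟨rfl, rfl, rfl⟩ | ⟨rfl, rfl, rfl⟩) | ⟨rfl, rfl, rfl⟩ | ⟨m', rfl, rfl, rfl, rfl⟩ |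
      ⟨n', rfl, rfl, rfl, rfl⟩)
    · exact ⟨⟨rfl, 0, .inl (by omega)⟩, by omega⟩
    · exact ⟨⟨rfl, 0, .inr (.inl (by omega))⟩, by omega⟩
    · exact ⟨⟨rfl, m + n + 1, .inr (.inr (by omega))⟩, by omega⟩
    · exact ⟨⟨rfl, m' + 1, .inl (by omega)⟩, by omega⟩
    · exact ⟨⟨rfl, n' + 1, .inr (.inl (by omega))⟩, by omega⟩

theorem disjoint_simple_mul_Dset {th ths : ℕ → ℕ → W}
    (hth : ∀ m n : ℕ, cen act (th m n) = alcoveCenter m n 1)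
    (hths : ∀ m n : ℕ, cen act (ths m n) = alcoveCenter m n 2) {y : W} {p q e : ℤ}
    (hy : cen act y = alcoveCenter p q e) (he : e = 1 ∨ e = 2) (hp : 0 ≤ p) (hq : 0 ≤ q) :
    Disjoint ({cs.simple 1 * y, cs.simple 2 * y} : Set W) (Dset th ths) := by
  rw [Set.disjoint_left]
  rintro w (rfl | rfl) hw
  · have := nonneg_of_mem_Dset hth hths (hA.cen_simple_one_mul hy) (by omega) hw
    omega
  · have := nonneg_of_mem_Dset hth hths (hA.cen_simple_two_mul hy) (by omega) hw
    omega

theorem Lset_dominant_of_eq_union (hcen : Function.Injective (cen act)) {th ths : ℕ → ℕ → W}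
    (hth : ∀ m n : ℕ, cen act (th m n) = alcoveCenter m n 1)
    (hths : ∀ m n : ℕ, cen act (ths m n) = alcoveCenter m n 2) {y : W} {p q e : ℤ}
    (hy : cen act y = alcoveCenter p q e) (he : e = 1 ∨ e = 2) (hp : 0 ≤ p) (hq : 0 ≤ q)
    {B : Set W} (hL : Lset cs y = {cs.simple 1 * y, cs.simple 2 * y} ∪ B)
    (hB : B ⊆ Dset th ths) :
    Disjoint ({cs.simple 1 * y, cs.simple 2 * y} : Set W) B ∧ Lset cs y ∩ Dset th ths = B ∧
      Lset cs (cs.simple 0 * y) = (cs.simple 0 * ·) '' Lset cs y ∪ {y} ∧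
      y ∉ (cs.simple 0 * ·) '' Lset cs y := by
  obtain ⟨hdisj, hinter⟩ := disjoint_and_inter_eq_of_eq_union hL
    (hA.disjoint_simple_mul_Dset hth hths hy he hp hq) hB
  exact ⟨hdisj, hinter, hA.Lset_simple_zero_mul hcen hy he hp hq,
    notMem_image_Lset cs (hA.length_simple_zero_mul hcen hy he (by omega))⟩

end IsStandardAction

end Action
end AffineA2

theorem statement1_general
    {W : Type*} [Group W] {M : CoxeterMatrix (Fin 3)} (cs : CoxeterSystem M W)
    (act : W →* Equiv.Perm E2)
    (h0 : ∀ v, act (cs.simple 0) v = reflE rho2 (-1) v)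
    (h1 : ∀ v, act (cs.simple 1) v = reflE a1 0 v)
    (h2 : ∀ v, act (cs.simple 2) v = reflE a2 0 v)
    (hcen : Function.Injective (cen act))
    (th ths : ℕ → ℕ → W)
    (hth : ∀ m n : ℕ, cen act (th m n) =
      cen act (cs.simple 1 * cs.simple 2 * cs.simple 1) + (m : ℝ) • fw1 + (n : ℝ) • fw2)
    (hths : ∀ m n : ℕ, cen act (ths m n) =
      cen act 1 + ((m : ℝ) + 1) • fw1 + ((n : ℝ) + 1) • fw2) :
    ∀ m n : ℕ,
      (Lset cs (th m n) =
          ({cs.simple 1 * th m n, cs.simple 2 * th m n} : Set W) ∪ {w | (∃ m', m = m' + 1 ∧ w = ths m' n) ∨ (∃ n', n = n' + 1 ∧ w = ths m n')} ∧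
        Disjoint ({cs.simple 1 * th m n, cs.simple 2 * th m n} : Set W) {w | (∃ m', m = m' + 1 ∧ w = ths m' n) ∨ (∃ n', n = n' + 1 ∧ w = ths m n')} ∧
        Lset cs (th m n) ∩ Dset th ths = {w | (∃ m', m = m' + 1 ∧ w = ths m' n) ∨ (∃ n', n = n' + 1 ∧ w = ths m n')} ∧
        Lset cs (cs.simple 0 * th m n) =
          (fun w => cs.simple 0 * w) '' Lset cs (th m n) ∪ {th m n} ∧
        th m n ∉ (fun w => cs.simple 0 * w) '' Lset cs (th m n)) ∧
      (Lset cs (ths m n) =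
          ({cs.simple 1 * ths m n, cs.simple 2 * ths m n} : Set W) ∪ {w | w = th m n ∨ (∃ m', m = m' + 1 ∧ w = th m' (n + 1)) ∨ (∃ n', n = n' + 1 ∧ w = th (m + 1) n')} ∧
        Disjoint ({cs.simple 1 * ths m n, cs.simple 2 * ths m n} : Set W) {w | w = th m n ∨ (∃ m', m = m' + 1 ∧ w = th m' (n + 1)) ∨ (∃ n', n = n' + 1 ∧ w = th (m + 1) n')} ∧
        Lset cs (ths m n) ∩ Dset th ths = {w | w = th m n ∨ (∃ m', m = m' + 1 ∧ w = th m' (n + 1)) ∨ (∃ n', n = n' + 1 ∧ w = th (m + 1) n')} ∧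
        Lset cs (cs.simple 0 * ths m n) =
          (fun w => cs.simple 0 * w) '' Lset cs (ths m n) ∪ {ths m n} ∧
        ths m n ∉ (fun w => cs.simple 0 * w) '' Lset cs (ths m n)) := by
  intro m n
  have hA : AffineA2.IsStandardAction cs act := ⟨funext h0, funext h1, funext h2⟩
  have hth' := hA.cen_th hth
  have hths' := AffineA2.cen_ths hths
  have hL_th := hA.Lset_th hcen hth' hths' m n
  have hL_ths := hA.Lset_ths hcen hth' hths' m n
  refine ⟨⟨hL_th, hA.Lset_dominant_of_eq_union hcen hth' hths' (hth' m n) (.inl rfl)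
      m.cast_nonneg n.cast_nonneg hL_th ?_⟩,
    ⟨hL_ths, hA.Lset_dominant_of_eq_union hcen hth' hths' (hths' m n) (.inr rfl)
      m.cast_nonneg n.cast_nonneg hL_ths ?_⟩⟩
  · rintro w (⟨m', -, rfl⟩ | ⟨n', -, rfl⟩) <;> exact .inr ⟨_, _, rfl⟩
  · rintro w (rfl | ⟨m', -, rfl⟩ | ⟨n', -, rfl⟩) <;> exact .inl ⟨_, _, rfl⟩

/-- description of the Bruhat cocovers of dominant elements and of `s₀ · y`. -/
theorem statement1
    {W : Type*} [Group W] {M : CoxeterMatrix (Fin 3)} (cs : CoxeterSystem M W)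
    (hM : ∀ i j : Fin 3, M i j = if i = j then 1 else 3)
    (act : W →* Equiv.Perm E2)
    (h0 : ∀ v, act (cs.simple 0) v = reflE rho2 (-1) v)
    (h1 : ∀ v, act (cs.simple 1) v = reflE a1 0 v)
    (h2 : ∀ v, act (cs.simple 2) v = reflE a2 0 v)
    (hcen : Function.Injective (cen act))
    (th ths : ℕ → ℕ → W)
    (hth : ∀ m n : ℕ, cen act (th m n) =
      cen act (cs.simple 1 * cs.simple 2 * cs.simple 1) + (m : ℝ) • fw1 + (n : ℝ) • fw2)
    (hths : ∀ m n : ℕ, cen act (ths m n) =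
      cen act 1 + ((m : ℝ) + 1) • fw1 + ((n : ℝ) + 1) • fw2) :
    ∀ m n : ℕ,
      (Lset cs (th m n) =
          ({cs.simple 1 * th m n, cs.simple 2 * th m n} : Set W) ∪ {w | (∃ m', m = m' + 1 ∧ w = ths m' n) ∨ (∃ n', n = n' + 1 ∧ w = ths m n')} ∧
        Disjoint ({cs.simple 1 * th m n, cs.simple 2 * th m n} : Set W) {w | (∃ m', m = m' + 1 ∧ w = ths m' n) ∨ (∃ n', n = n' + 1 ∧ w = ths m n')} ∧
        Lset cs (th m n) ∩ Dset th ths = {w | (∃ m', m = m' + 1 ∧ w = ths m' n) ∨ (∃ n', n = n' + 1 ∧ w = ths m n')} ∧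
        Lset cs (cs.simple 0 * th m n) =
          (fun w => cs.simple 0 * w) '' Lset cs (th m n) ∪ {th m n} ∧
        th m n ∉ (fun w => cs.simple 0 * w) '' Lset cs (th m n)) ∧
      (Lset cs (ths m n) =
          ({cs.simple 1 * ths m n, cs.simple 2 * ths m n} : Set W) ∪ {w | w = th m n ∨ (∃ m', m = m' + 1 ∧ w = th m' (n + 1)) ∨ (∃ n', n = n' + 1 ∧ w = th (m + 1) n')} ∧
        Disjoint ({cs.simple 1 * ths m n, cs.simple 2 * ths m n} : Set W) {w | w = th m n ∨ (∃ m', m = m' + 1 ∧ w = th m' (n + 1)) ∨ (∃ n', n = n' + 1 ∧ w = th (m + 1) n')} ∧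
        Lset cs (ths m n) ∩ Dset th ths = {w | w = th m n ∨ (∃ m', m = m' + 1 ∧ w = th m' (n + 1)) ∨ (∃ n', n = n' + 1 ∧ w = th (m + 1) n')} ∧
        Lset cs (cs.simple 0 * ths m n) =
          (fun w => cs.simple 0 * w) '' Lset cs (ths m n) ∪ {ths m n} ∧
        ths m n ∉ (fun w => cs.simple 0 * w) '' Lset cs (ths m n)) :=
  statement1_general cs act h0 h1 h2 hcen th ths hth hths
end
end

section
/- Let z, z' ∈ W be such that cen(z) ∈ F_id and cen(z') ∈ F_id. Then z ≤ z' in the Bruhat order if and only if both (ϖ1, cen(z') − cen(z)) ≥ 0 and (ϖ2, cen(z') − cen(z)) ≥ 0, i.e. if and only if cen(z') − cen(z) is a nonnegative real combination of α1 and α2. -/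
noncomputable section

open scoped RealInnerProductSpace

/-!
Index the alcove of `w` by the ceilings `(m₁, m₂, m₃)` of `(α₁, ·)`, `(α₂, ·)`, `(ρ, ·)` on it.
Then `ℓ(w) = |m₁| + |m₂| + |m₃|` is the number of walls separating `wA₊` from `A₊`, the
reflections of `W` act exactly as the affine reflections `s_{α,k}`, and a Bruhat step `x < tx`
becomes an explicit integer move of the index that raises this wall count. On `F_id` the index is
nonnegative, and `(ϖ₁, cen)`, `(ϖ₂, cen)` are `(m₁ + m₃ - 1)/3`, `(m₂ + m₃ - 1)/3`.

If both increase from `z` to `z'`, one reaches `z'` from `z` by reflecting each time in an upper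
boundary line of the current strips, staying in `F_id` and below `z'` while the length grows.
Conversely, the piecewise-linear `potential` never decreases along a Bruhat step and agrees with
`1 + 3(ϖ₁, cen)` on `F_id`; its mirror image does the same for `ϖ₂`.
-/

theorem CoxeterSystem.length_eq_of_simple_mul_s5 {B W : Type*} [Group W] {M : CoxeterMatrix B}
    (cs : CoxeterSystem M W) {f : W → ℕ} (h_one : f 1 = 0)
    (h_le : ∀ w i, f (cs.simple i * w) ≤ f w + 1)
    (h_lt : ∀ w, w ≠ 1 → ∃ i, f (cs.simple i * w) < f w) (w : W) :
    cs.length w = f w := by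
  apply le_antisymm
  · induction hn : f w using Nat.strong_induction_on generalizing w with
    | _ n ih =>
      by_cases hw : w = 1
      · simp [hw]
      obtain ⟨i, hi⟩ := h_lt w hw
      have h_desc := ih _ (hn ▸ hi) (cs.simple i * w) rfl
      have h_len := cs.length_le_length_mul_add_left (cs.simple i) w
      rw [cs.length_simple] at h_len
      omega
  · obtain ⟨ω, hω, rfl⟩ := cs.exists_isReduced w
    rw [hω.eq]
    clear hω
    induction ω with
    | nil => simp [h_one]
    | cons i ω ih =>
      rw [cs.wordProd_cons, List.length_cons]
      exact (h_le _ i).trans (Nat.succ_le_succ ih)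

theorem reflE_a1_apply (k : ℝ) (v : E2) : reflE a1 k v = (v.2 - v.1 + k, v.2) := by
  ext <;> simp [reflE, B2, a1]; ring

theorem reflE_a2_apply (k : ℝ) (v : E2) : reflE a2 k v = (v.1, v.1 - v.2 + k) := by
  ext <;> simp [reflE, B2, a2]; ring

theorem reflE_rho2_apply (k : ℝ) (v : E2) : reflE rho2 k v = (k - v.2, k - v.1) := by
  ext <;> simp [reflE, B2, rho2] <;> ring

theorem reflE_add_sub (a c v : E2) (k : ℝ) : reflE a k (v - c) + c = reflE a (k + B2 a c) v := by
  ext <;> simp [reflE, B2] <;> ring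

/-- The barycenter of the alcove `{mᵢ - 1 < (αᵢ, ·) < mᵢ, m₃ - 1 < (ρ, ·) < m₃}`, in coordinates
with respect to `α₁, α₂`; these strips meet in an alcove exactly when `IsAlcoveIndex m₁ m₂ m₃`. -/
def barycenter (m₁ m₂ m₃ : ℤ) : E2 := ((m₁ + m₃ - 1) / 3, (m₂ + m₃ - 1) / 3)

def IsAlcoveIndex (m₁ m₂ m₃ : ℤ) : Prop := m₁ + m₂ - 1 ≤ m₃ ∧ m₃ ≤ m₁ + m₂

theorem isAlcoveIndex_zero : IsAlcoveIndex 0 0 0 := by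
  norm_num [IsAlcoveIndex]

section Barycenter

variable {m₁ m₂ m₃ n₁ n₂ n₃ : ℤ}

theorem B2_a1_barycenter : B2 a1 (barycenter m₁ m₂ m₃) = (2 * m₁ - m₂ + m₃ - 1) / 3 := by
  simp only [B2, a1, barycenter]; ring

theorem B2_a2_barycenter : B2 a2 (barycenter m₁ m₂ m₃) = (2 * m₂ - m₁ + m₃ - 1) / 3 := by
  simp only [B2, a2, barycenter]; ring

theorem B2_rho2_barycenter : B2 rho2 (barycenter m₁ m₂ m₃) = (m₁ + m₂ + 2 * m₃ - 2) / 3 := by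
  simp only [B2, rho2, barycenter]; ring

theorem B2_fw1_sub_barycenter_nonneg_iff :
    0 ≤ B2 fw1 (barycenter n₁ n₂ n₃ - barycenter m₁ m₂ m₃) ↔ m₁ + m₃ ≤ n₁ + n₃ := by
  have h : B2 fw1 (barycenter n₁ n₂ n₃ - barycenter m₁ m₂ m₃) =
      ((n₁ + n₃ : ℤ) - (m₁ + m₃ : ℤ)) / 3 := by
    simp only [B2, fw1, barycenter, Prod.fst_sub, Prod.snd_sub]; push_cast; ring
  rw [h, le_div_iff₀ (by norm_num : (0 : ℝ) < 3), zero_mul, sub_nonneg, Int.cast_le]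

theorem B2_fw2_sub_barycenter_nonneg_iff :
    0 ≤ B2 fw2 (barycenter n₁ n₂ n₃ - barycenter m₁ m₂ m₃) ↔ m₂ + m₃ ≤ n₂ + n₃ := by
  have h : B2 fw2 (barycenter n₁ n₂ n₃ - barycenter m₁ m₂ m₃) =
      ((n₂ + n₃ : ℤ) - (m₂ + m₃ : ℤ)) / 3 := by
    simp only [B2, fw2, barycenter, Prod.fst_sub, Prod.snd_sub]; push_cast; ring
  rw [h, le_div_iff₀ (by norm_num : (0 : ℝ) < 3), zero_mul, sub_nonneg, Int.cast_le]

theorem IsAlcoveIndex.ceil_B2_barycenter (h : IsAlcoveIndex m₁ m₂ m₃) :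
    ⌈B2 a1 (barycenter m₁ m₂ m₃)⌉ = m₁ ∧ ⌈B2 a2 (barycenter m₁ m₂ m₃)⌉ = m₂ ∧
      ⌈B2 rho2 (barycenter m₁ m₂ m₃)⌉ = m₃ := by
  have hlo : (m₁ + m₂ - 1 : ℝ) ≤ m₃ := by exact_mod_cast h.1
  have hhi : (m₃ : ℝ) ≤ m₁ + m₂ := by exact_mod_cast h.2
  simp only [Int.ceil_eq_iff, B2_a1_barycenter, B2_a2_barycenter, B2_rho2_barycenter]
  refine ⟨⟨?_, ?_⟩, ⟨?_, ?_⟩, ⟨?_, ?_⟩⟩ <;> linarith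

theorem IsAlcoveIndex.eq_of_barycenter_eq (hm : IsAlcoveIndex m₁ m₂ m₃)
    (hn : IsAlcoveIndex n₁ n₂ n₃) (h : barycenter m₁ m₂ m₃ = barycenter n₁ n₂ n₃) :
    m₁ = n₁ ∧ m₂ = n₂ ∧ m₃ = n₃ := by
  obtain ⟨h₁, h₂, h₃⟩ := hm.ceil_B2_barycenter
  obtain ⟨h₁', h₂', h₃'⟩ := hn.ceil_B2_barycenter
  rw [h] at h₁ h₂ h₃
  exact ⟨h₁.symm.trans h₁', h₂.symm.trans h₂', h₃.symm.trans h₃'⟩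

theorem IsAlcoveIndex.nonneg_of_barycenter_mem_Fid (hm : IsAlcoveIndex m₁ m₂ m₃)
    (h : barycenter m₁ m₂ m₃ ∈ Fid) : 0 ≤ m₁ ∧ 0 ≤ m₂ ∧ 0 ≤ m₃ := by
  simp only [Fid, Set.mem_ofPred_eq, B2_a1_barycenter, B2_a2_barycenter, B2_rho2_barycenter] at h
  have hlo : (m₁ + m₂ - 1 : ℝ) ≤ m₃ := by exact_mod_cast hm.1
  have hhi : (m₃ : ℝ) ≤ m₁ + m₂ := by exact_mod_cast hm.2
  have h₁ : (-1 : ℤ) < m₁ := by exact_mod_cast (show (-1 : ℝ) < m₁ by linarith)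
  have h₂ : (-1 : ℤ) < m₂ := by exact_mod_cast (show (-1 : ℝ) < m₂ by linarith)
  have h₃ : (-1 : ℤ) < m₃ := by exact_mod_cast (show (-1 : ℝ) < m₃ by linarith)
  omega

/-- For a point `v` of an alcove, the number of walls `H_{α,k}` separating `v` from `A₊`. -/
def wallCount (v : E2) : ℕ := ⌈B2 a1 v⌉.natAbs + ⌈B2 a2 v⌉.natAbs + ⌈B2 rho2 v⌉.natAbs

theorem IsAlcoveIndex.wallCount_barycenter (h : IsAlcoveIndex m₁ m₂ m₃) :
    wallCount (barycenter m₁ m₂ m₃) = m₁.natAbs + m₂.natAbs + m₃.natAbs := by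
  obtain ⟨h₁, h₂, h₃⟩ := h.ceil_B2_barycenter
  rw [wallCount, h₁, h₂, h₃]

theorem reflE_a1_barycenter (k : ℤ) :
    reflE a1 k (barycenter m₁ m₂ m₃) = barycenter (2 * k + 1 - m₁) (m₃ - k) (m₂ + k) := by
  rw [reflE_a1_apply]; ext <;> simp only [barycenter] <;> push_cast <;> ring

theorem reflE_a2_barycenter (k : ℤ) :
    reflE a2 k (barycenter m₁ m₂ m₃) = barycenter (m₃ - k) (2 * k + 1 - m₂) (m₁ + k) := by
  rw [reflE_a2_apply]; ext <;> simp only [barycenter] <;> push_cast <;> ring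

theorem reflE_rho2_barycenter (k : ℤ) :
    reflE rho2 k (barycenter m₁ m₂ m₃) = barycenter (k + 1 - m₂) (k + 1 - m₁) (2 * k + 1 - m₃) := by
  rw [reflE_rho2_apply]; ext <;> simp only [barycenter] <;> push_cast <;> ring

end Barycenter

def IsReflectedIndex (m₁ m₂ m₃ n₁ n₂ n₃ : ℤ) : Prop :=
  ∃ k : ℤ, (n₁ = 2 * k + 1 - m₁ ∧ n₂ = m₃ - k ∧ n₃ = m₂ + k) ∨
    (n₁ = m₃ - k ∧ n₂ = 2 * k + 1 - m₂ ∧ n₃ = m₁ + k) ∨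
    (n₁ = k + 1 - m₂ ∧ n₂ = k + 1 - m₁ ∧ n₃ = 2 * k + 1 - m₃)

/-- On barycenters `v` of alcoves this is `1 + 3 max_λ ((λ, v) - [λ ≠ ϖ₁])`, `λ` running over the
orbit `{ϖ₁, ϖ₂ - ϖ₁, -ϖ₂}` of `ϖ₁` under the finite Weyl group. -/
def potential (m₁ m₂ m₃ : ℤ) : ℤ := max (m₁ + m₃) (max (-m₂ - m₃ - 1) (m₂ - m₁ - 2))

section IndexArithmetic

variable {m₁ m₂ m₃ n₁ n₂ n₃ : ℤ}

theorem IsAlcoveIndex.swap (h : IsAlcoveIndex m₁ m₂ m₃) : IsAlcoveIndex m₂ m₁ m₃ := by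
  unfold IsAlcoveIndex at *
  omega

theorem IsReflectedIndex.isAlcoveIndex (h : IsReflectedIndex m₁ m₂ m₃ n₁ n₂ n₃)
    (hm : IsAlcoveIndex m₁ m₂ m₃) : IsAlcoveIndex n₁ n₂ n₃ := by
  obtain ⟨k, h⟩ := h
  unfold IsAlcoveIndex at *
  omega

theorem IsReflectedIndex.swap (h : IsReflectedIndex m₁ m₂ m₃ n₁ n₂ n₃) :
    IsReflectedIndex m₂ m₁ m₃ n₂ n₁ n₃ := by
  obtain ⟨k, h | h | h⟩ := h
  · exact ⟨k, .inr (.inl ⟨h.2.1, h.1, h.2.2⟩)⟩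
  · exact ⟨k, .inl ⟨h.2.1, h.1, h.2.2⟩⟩
  · exact ⟨k, .inr (.inr ⟨h.2.1, h.1, h.2.2⟩)⟩

theorem potential_le_of_isReflectedIndex (hm : IsAlcoveIndex m₁ m₂ m₃)
    (h : IsReflectedIndex m₁ m₂ m₃ n₁ n₂ n₃)
    (hlt : m₁.natAbs + m₂.natAbs + m₃.natAbs < n₁.natAbs + n₂.natAbs + n₃.natAbs) :
    potential m₁ m₂ m₃ ≤ potential n₁ n₂ n₃ := by
  obtain ⟨k, ⟨rfl, rfl, rfl⟩ | ⟨rfl, rfl, rfl⟩ | ⟨rfl, rfl, rfl⟩⟩ := h <;>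
    unfold potential IsAlcoveIndex at * <;> omega

theorem IsAlcoveIndex.potential_of_nonneg (hm : IsAlcoveIndex m₁ m₂ m₃) (h₁ : 0 ≤ m₁)
    (h₃ : 0 ≤ m₃) : potential m₁ m₂ m₃ = m₁ + m₃ := by
  unfold potential IsAlcoveIndex at *
  omega

/-- The witnesses reflect in the upper boundary lines `H_{α₁,m₁}`, `H_{α₂,m₂}`, `H_{ρ,m₃}` of the
strips of `m`. -/
theorem exists_isReflectedIndex_le (hm : IsAlcoveIndex m₁ m₂ m₃) (hn : IsAlcoveIndex n₁ n₂ n₃)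
    (hm₀ : 0 ≤ m₁ ∧ 0 ≤ m₂ ∧ 0 ≤ m₃) (hn₀ : 0 ≤ n₁ ∧ 0 ≤ n₂ ∧ 0 ≤ n₃)
    (h₁ : m₁ + m₃ ≤ n₁ + n₃) (h₂ : m₂ + m₃ ≤ n₂ + n₃) (hne : ¬(m₁ = n₁ ∧ m₂ = n₂ ∧ m₃ = n₃)) :
    ∃ p₁ p₂ p₃, IsReflectedIndex m₁ m₂ m₃ p₁ p₂ p₃ ∧
      m₁.natAbs + m₂.natAbs + m₃.natAbs < p₁.natAbs + p₂.natAbs + p₃.natAbs ∧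
      (0 ≤ p₁ ∧ 0 ≤ p₂ ∧ 0 ≤ p₃) ∧ p₁ + p₃ ≤ n₁ + n₃ ∧ p₂ + p₃ ≤ n₂ + n₃ ∧
      m₁ + m₂ + 2 * m₃ < p₁ + p₂ + 2 * p₃ := by
  unfold IsAlcoveIndex at hm hn
  by_cases hup : m₃ = m₁ + m₂
  · by_cases hu : m₁ + m₃ < n₁ + n₃
    · exact ⟨m₁ + 1, m₂, m₃, ⟨m₁, .inl (by omega)⟩, by omega⟩
    · exact ⟨m₁, m₂ + 1, m₃, ⟨m₂, .inr (.inl (by omega))⟩, by omega⟩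
  · by_cases huv : m₁ + m₃ < n₁ + n₃ ∧ m₂ + m₃ < n₂ + n₃
    · exact ⟨m₁, m₂, m₃ + 1, ⟨m₃, .inr (.inr (by omega))⟩, by omega⟩
    by_cases hu : m₁ + m₃ < n₁ + n₃
    · exact ⟨m₁ + 1, m₂ - 1, m₃ + 1, ⟨m₁, .inl (by omega)⟩, by omega⟩
    · exact ⟨m₁ - 1, m₂ + 1, m₃ + 1, ⟨m₂, .inr (.inl (by omega))⟩, by omega⟩

end IndexArithmetic

def IsAffineReflection (f : E2 → E2) : Prop :=
  ∃ k : ℤ, f = reflE a1 k ∨ f = reflE a2 k ∨ f = reflE rho2 k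

theorem IsAffineReflection.conj {f g : E2 → E2} (hf : IsAffineReflection f)
    (hg : IsAffineReflection g) : IsAffineReflection (g ∘ f ∘ g) := by
  obtain ⟨j, rfl | rfl | rfl⟩ := hg <;> obtain ⟨k, rfl | rfl | rfl⟩ := hf
  on_goal 1 => refine ⟨2 * j - k, .inl ?_⟩
  on_goal 2 => refine ⟨k + j, .inr (.inr ?_)⟩
  on_goal 3 => refine ⟨k - j, .inr (.inl ?_)⟩
  on_goal 4 => refine ⟨k + j, .inr (.inr ?_)⟩
  on_goal 5 => refine ⟨2 * j - k, .inr (.inl ?_)⟩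
  on_goal 6 => refine ⟨k - j, .inl ?_⟩
  on_goal 7 => refine ⟨j - k, .inr (.inl ?_)⟩
  on_goal 8 => refine ⟨j - k, .inl ?_⟩
  on_goal 9 => refine ⟨2 * j - k, .inr (.inr ?_)⟩
  all_goals
    funext v
    simp only [Function.comp_apply, reflE_a1_apply, reflE_a2_apply, reflE_rho2_apply]
    ext <;> push_cast <;> ring

theorem IsAffineReflection.exists_isReflectedIndex {f : E2 → E2} (hf : IsAffineReflection f)
    (m₁ m₂ m₃ : ℤ) : ∃ n₁ n₂ n₃, IsReflectedIndex m₁ m₂ m₃ n₁ n₂ n₃ ∧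
      f (barycenter m₁ m₂ m₃) = barycenter n₁ n₂ n₃ := by
  obtain ⟨k, rfl | rfl | rfl⟩ := hf
  · exact ⟨_, _, _, ⟨k, .inl ⟨rfl, rfl, rfl⟩⟩, reflE_a1_barycenter k⟩
  · exact ⟨_, _, _, ⟨k, .inr (.inl ⟨rfl, rfl, rfl⟩)⟩, reflE_a2_barycenter k⟩
  · exact ⟨_, _, _, ⟨k, .inr (.inr ⟨rfl, rfl, rfl⟩)⟩, reflE_rho2_barycenter k⟩

theorem IsReflectedIndex.exists_isAffineReflection {m₁ m₂ m₃ n₁ n₂ n₃ : ℤ}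
    (h : IsReflectedIndex m₁ m₂ m₃ n₁ n₂ n₃) :
    ∃ f, IsAffineReflection f ∧ f (barycenter m₁ m₂ m₃) = barycenter n₁ n₂ n₃ := by
  obtain ⟨k, ⟨rfl, rfl, rfl⟩ | ⟨rfl, rfl, rfl⟩ | ⟨rfl, rfl, rfl⟩⟩ := h
  · exact ⟨_, ⟨k, .inl rfl⟩, reflE_a1_barycenter k⟩
  · exact ⟨_, ⟨k, .inr (.inl rfl)⟩, reflE_a2_barycenter k⟩
  · exact ⟨_, ⟨k, .inr (.inr rfl)⟩, reflE_rho2_barycenter k⟩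

section AffineAction

variable {W : Type*} [Group W] {M : CoxeterMatrix (Fin 3)} (cs : CoxeterSystem M W)
  (act : W →* Equiv.Perm E2)

theorem cen_mul (x y : W) : cen act (x * y) = act x (cen act y) := by
  simp [cen, Equiv.Perm.mul_apply]

theorem cen_one : cen act 1 = barycenter 0 0 0 := by
  ext <;> simp [cen, barycenter, rho2] <;> norm_num

theorem act_inv_apply_of_translation {g : W} {c : E2} (hg : ∀ v, act g v = v + c) (v : E2) :
    act g⁻¹ v = v - c := by
  rw [map_inv, Equiv.Perm.inv_eq_iff_eq, hg, sub_add_cancel]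

theorem act_zpow_apply_of_translation {g : W} {c : E2} (hg : ∀ v, act g v = v + c) (n : ℤ)
    (v : E2) : act (g ^ n) v = v + (n : ℝ) • c := by
  induction n using Int.induction_on generalizing v with
  | zero => simp
  | succ n ih =>
    rw [zpow_add_one, map_mul, Equiv.Perm.mul_apply, hg, ih]
    push_cast
    module
  | pred n ih =>
    rw [zpow_sub_one, map_mul, Equiv.Perm.mul_apply, act_inv_apply_of_translation act hg, ih]
    push_cast
    module

theorem act_conj_apply_of_translation {g s : W} {c a : E2} {k : ℝ} (hg : ∀ v, act g v = v + c)
    (hs : ∀ v, act s v = reflE a k v) (v : E2) :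
    act (g * s * g⁻¹) v = reflE a (k + B2 a c) v := by
  simp only [map_mul, Equiv.Perm.mul_apply, act_inv_apply_of_translation act hg, hs, hg,
    reflE_add_sub]

variable (h0 : ∀ v, act (cs.simple 0) v = reflE rho2 (-1) v)
  (h1 : ∀ v, act (cs.simple 1) v = reflE a1 0 v) (h2 : ∀ v, act (cs.simple 2) v = reflE a2 0 v)
include h0 h1 h2

theorem isAffineReflection_act_simple (i : Fin 3) : IsAffineReflection (act (cs.simple i)) := by
  fin_cases i
  · exact ⟨-1, .inr (.inr (funext fun v => by simpa using h0 v))⟩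
  · exact ⟨0, .inl (funext fun v => by simpa using h1 v)⟩
  · exact ⟨0, .inr (.inl (funext fun v => by simpa using h2 v))⟩

theorem exists_isAlcoveIndex_cen_eq (w : W) :
    ∃ m₁ m₂ m₃, IsAlcoveIndex m₁ m₂ m₃ ∧ cen act w = barycenter m₁ m₂ m₃ := by
  induction w using cs.simple_induction_left with
  | one => exact ⟨0, 0, 0, isAlcoveIndex_zero, cen_one act⟩
  | mul_simple_left w i ih =>
    obtain ⟨m₁, m₂, m₃, hm, hw⟩ := ih
    obtain ⟨n₁, n₂, n₃, hn, hbar⟩ :=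
      (isAffineReflection_act_simple cs act h0 h1 h2 i).exists_isReflectedIndex m₁ m₂ m₃
    exact ⟨n₁, n₂, n₃, hn.isAlcoveIndex hm, by rw [cen_mul, hw, hbar]⟩

theorem wallCount_cen_simple_mul {w : W} {m₁ m₂ m₃ : ℤ} (hm : IsAlcoveIndex m₁ m₂ m₃)
    (hw : cen act w = barycenter m₁ m₂ m₃) :
    wallCount (cen act (cs.simple 0 * w)) = m₂.natAbs + m₁.natAbs + (1 + m₃).natAbs ∧
      wallCount (cen act (cs.simple 1 * w)) = (1 - m₁).natAbs + m₃.natAbs + m₂.natAbs ∧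
      wallCount (cen act (cs.simple 2 * w)) = m₃.natAbs + (1 - m₂).natAbs + m₁.natAbs := by
  have e₀ : cen act (cs.simple 0 * w) = barycenter (-m₂) (-m₁) (-1 - m₃) := by
    rw [cen_mul, hw, h0]
    convert reflE_rho2_barycenter (-1) using 2 <;> push_cast <;> ring_nf
  have e₁ : cen act (cs.simple 1 * w) = barycenter (1 - m₁) m₃ m₂ := by
    rw [cen_mul, hw, h1]
    convert reflE_a1_barycenter 0 using 2 <;> push_cast <;> ring_nf
  have e₂ : cen act (cs.simple 2 * w) = barycenter m₃ (1 - m₂) m₁ := by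
    rw [cen_mul, hw, h2]
    convert reflE_a2_barycenter 0 using 2 <;> push_cast <;> ring_nf
  unfold IsAlcoveIndex at hm
  rw [e₀, e₁, e₂, IsAlcoveIndex.wallCount_barycenter (by unfold IsAlcoveIndex; omega),
    IsAlcoveIndex.wallCount_barycenter (by unfold IsAlcoveIndex; omega),
    IsAlcoveIndex.wallCount_barycenter (by unfold IsAlcoveIndex; omega)]
  omega

theorem length_eq_wallCount (hcen : Function.Injective (cen act)) (w : W) :
    cs.length w = wallCount (cen act w) := by
  refine cs.length_eq_of_simple_mul_s5 (f := fun w => wallCount (cen act w)) ?_ ?_ ?_ w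
  · rw [cen_one, isAlcoveIndex_zero.wallCount_barycenter]; rfl
  · intro w i
    obtain ⟨m₁, m₂, m₃, hm, hw⟩ := exists_isAlcoveIndex_cen_eq cs act h0 h1 h2 w
    obtain ⟨e₀, e₁, e₂⟩ := wallCount_cen_simple_mul cs act h0 h1 h2 hm hw
    simp only [hw, hm.wallCount_barycenter]
    obtain rfl | rfl | rfl : i = 0 ∨ i = 1 ∨ i = 2 := by fin_cases i <;> simp
    all_goals omega
  · intro w hne
    obtain ⟨m₁, m₂, m₃, hm, hw⟩ := exists_isAlcoveIndex_cen_eq cs act h0 h1 h2 w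
    obtain ⟨e₀, e₁, e₂⟩ := wallCount_cen_simple_mul cs act h0 h1 h2 hm hw
    have hm₀ : ¬(m₁ = 0 ∧ m₂ = 0 ∧ m₃ = 0) := by
      rintro ⟨rfl, rfl, rfl⟩
      exact hne (hcen (hw.trans (cen_one act).symm))
    simp only [hw, hm.wallCount_barycenter]
    unfold IsAlcoveIndex at hm
    by_cases c₁ : 1 ≤ m₁
    · exact ⟨1, by omega⟩
    by_cases c₂ : 1 ≤ m₂
    · exact ⟨2, by omega⟩
    · exact ⟨0, by omega⟩

theorem length_eq_of_cen_eq (hcen : Function.Injective (cen act)) {w : W} {m₁ m₂ m₃ : ℤ}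
    (hm : IsAlcoveIndex m₁ m₂ m₃) (hw : cen act w = barycenter m₁ m₂ m₃) :
    cs.length w = m₁.natAbs + m₂.natAbs + m₃.natAbs := by
  rw [length_eq_wallCount cs act h0 h1 h2 hcen, hw, hm.wallCount_barycenter]

theorem exists_act_eq_add_a1 : ∃ g : W, ∀ v, act g v = v + a1 :=
  ⟨cs.simple 1 * (cs.simple 2 * cs.simple 0 * cs.simple 2), fun v => by
    simp only [map_mul, Equiv.Perm.mul_apply, h0, h1, h2, reflE_a1_apply, reflE_a2_apply,
      reflE_rho2_apply]
    ext <;> simp [a1]; ring⟩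

theorem exists_act_eq_add_a2 : ∃ g : W, ∀ v, act g v = v + a2 :=
  ⟨cs.simple 2 * (cs.simple 1 * cs.simple 0 * cs.simple 1), fun v => by
    simp only [map_mul, Equiv.Perm.mul_apply, h0, h1, h2, reflE_a1_apply, reflE_a2_apply,
      reflE_rho2_apply]
    ext <;> simp [a2]; ring⟩

/-- `s_{α,k}` is the conjugate of `s_{α,0}` (for `α = ρ`, of `s_{ρ,-1}`) by a power of the
translation by a simple root that is not orthogonal to `α`. -/
theorem IsAffineReflection.exists_isReflection {f : E2 → E2} (hf : IsAffineReflection f) :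
    ∃ t, cs.IsReflection t ∧ ⇑(act t) = f := by
  obtain ⟨g₁, hg₁⟩ := exists_act_eq_add_a1 cs act h0 h1 h2
  obtain ⟨g₂, hg₂⟩ := exists_act_eq_add_a2 cs act h0 h1 h2
  obtain ⟨k, rfl | rfl | rfl⟩ := hf
  · refine ⟨g₂ ^ (-k) * cs.simple 1 * (g₂ ^ (-k))⁻¹, ⟨_, _, rfl⟩, funext fun v => ?_⟩
    rw [act_conj_apply_of_translation act (act_zpow_apply_of_translation act hg₂ (-k)) h1]
    simp [B2, a1, a2]
  · refine ⟨g₁ ^ (-k) * cs.simple 2 * (g₁ ^ (-k))⁻¹, ⟨_, _, rfl⟩, funext fun v => ?_⟩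
    rw [act_conj_apply_of_translation act (act_zpow_apply_of_translation act hg₁ (-k)) h2]
    simp [B2, a1, a2]
  · refine ⟨g₁ ^ (k + 1) * cs.simple 0 * (g₁ ^ (k + 1))⁻¹, ⟨_, _, rfl⟩, funext fun v => ?_⟩
    rw [act_conj_apply_of_translation act (act_zpow_apply_of_translation act hg₁ (k + 1)) h0]
    congr 1
    simp only [B2, a1, rho2, Prod.smul_mk, smul_eq_mul]
    push_cast
    ring

theorem isAffineReflection_act_of_isReflection {t : W} (ht : cs.IsReflection t) :
    IsAffineReflection (act t) := by
  obtain ⟨w, i, rfl⟩ := ht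
  induction w using cs.simple_induction_left with
  | one => simpa using isAffineReflection_act_simple cs act h0 h1 h2 i
  | mul_simple_left w j ih =>
    have hconj : cs.simple j * w * cs.simple i * (cs.simple j * w)⁻¹ =
        cs.simple j * (w * cs.simple i * w⁻¹) * cs.simple j := by
      simp [mul_assoc]
    rw [hconj, map_mul, map_mul, Equiv.Perm.coe_mul, Equiv.Perm.coe_mul]
    exact ih.conj (isAffineReflection_act_simple cs act h0 h1 h2 j)

end AffineAction

section BruhatOrder

variable {W : Type*} [Group W] {M : CoxeterMatrix (Fin 3)} (cs : CoxeterSystem M W)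
  (act : W →* Equiv.Perm E2)
  (h0 : ∀ v, act (cs.simple 0) v = reflE rho2 (-1) v)
  (h1 : ∀ v, act (cs.simple 1) v = reflE a1 0 v) (h2 : ∀ v, act (cs.simple 2) v = reflE a2 0 v)
  (hcen : Function.Injective (cen act))
include h0 h1 h2 hcen

theorem potential_le_of_bruhat_step {x y : W} {m₁ m₂ m₃ n₁ n₂ n₃ : ℤ}
    (h : (∃ t, cs.IsReflection t ∧ y = t * x) ∧ cs.length x < cs.length y)
    (hm : IsAlcoveIndex m₁ m₂ m₃) (hx : cen act x = barycenter m₁ m₂ m₃)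
    (hn : IsAlcoveIndex n₁ n₂ n₃) (hy : cen act y = barycenter n₁ n₂ n₃) :
    potential m₁ m₂ m₃ ≤ potential n₁ n₂ n₃ ∧ potential m₂ m₁ m₃ ≤ potential n₂ n₁ n₃ := by
  obtain ⟨⟨t, ht, rfl⟩, hlen⟩ := h
  obtain ⟨p₁, p₂, p₃, hp, hbar⟩ :=
    (isAffineReflection_act_of_isReflection cs act h0 h1 h2 ht).exists_isReflectedIndex m₁ m₂ m₃
  obtain ⟨rfl, rfl, rfl⟩ :=
    (hp.isAlcoveIndex hm).eq_of_barycenter_eq hn (by rw [← hbar, ← hx, ← cen_mul, hy])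
  rw [length_eq_of_cen_eq cs act h0 h1 h2 hcen hm hx,
    length_eq_of_cen_eq cs act h0 h1 h2 hcen hn hy] at hlen
  exact ⟨potential_le_of_isReflectedIndex hm hp hlen,
    potential_le_of_isReflectedIndex hm.swap hp.swap (by omega)⟩

theorem potential_le_of_bruhatLE {x y : W} (h : bruhatLE cs x y) {m₁ m₂ m₃ n₁ n₂ n₃ : ℤ}
    (hm : IsAlcoveIndex m₁ m₂ m₃) (hx : cen act x = barycenter m₁ m₂ m₃)
    (hn : IsAlcoveIndex n₁ n₂ n₃) (hy : cen act y = barycenter n₁ n₂ n₃) :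
    potential m₁ m₂ m₃ ≤ potential n₁ n₂ n₃ ∧ potential m₂ m₁ m₃ ≤ potential n₂ n₁ n₃ := by
  rcases h with rfl | h
  · obtain ⟨rfl, rfl, rfl⟩ := hm.eq_of_barycenter_eq hn (hx.symm.trans hy)
    exact ⟨le_rfl, le_rfl⟩
  induction h generalizing n₁ n₂ n₃ with
  | single h => exact potential_le_of_bruhat_step cs act h0 h1 h2 hcen h hm hx hn hy
  | tail _ h ih =>
    obtain ⟨p₁, p₂, p₃, hp, hb⟩ := exists_isAlcoveIndex_cen_eq cs act h0 h1 h2 _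
    obtain ⟨i₁, i₂⟩ := ih hp hb
    obtain ⟨j₁, j₂⟩ := potential_le_of_bruhat_step cs act h0 h1 h2 hcen h hp hb hn hy
    exact ⟨i₁.trans j₁, i₂.trans j₂⟩

theorem bruhatLE_of_le {z z' : W} {m₁ m₂ m₃ n₁ n₂ n₃ : ℤ}
    (hm : IsAlcoveIndex m₁ m₂ m₃) (hz : cen act z = barycenter m₁ m₂ m₃)
    (hm₀ : 0 ≤ m₁ ∧ 0 ≤ m₂ ∧ 0 ≤ m₃)
    (hn : IsAlcoveIndex n₁ n₂ n₃) (hz' : cen act z' = barycenter n₁ n₂ n₃)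
    (hn₀ : 0 ≤ n₁ ∧ 0 ≤ n₂ ∧ 0 ≤ n₃)
    (h₁ : m₁ + m₃ ≤ n₁ + n₃) (h₂ : m₂ + m₃ ≤ n₂ + n₃) : bruhatLE cs z z' := by
  by_cases heq : m₁ = n₁ ∧ m₂ = n₂ ∧ m₃ = n₃
  · obtain ⟨rfl, rfl, rfl⟩ := heq
    exact .inl (hcen (hz.trans hz'.symm))
  obtain ⟨p₁, p₂, p₃, hp, hlt, hp₀, hp₁, hp₂, hdec⟩ :=
    exists_isReflectedIndex_le hm hn hm₀ hn₀ h₁ h₂ heq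
  obtain ⟨f, hf, hbar⟩ := hp.exists_isAffineReflection
  obtain ⟨t, ht, rfl⟩ := hf.exists_isReflection cs act h0 h1 h2
  have htz : cen act (t * z) = barycenter p₁ p₂ p₃ := by rw [cen_mul, hz, hbar]
  have hstep : bruhatLT cs z (t * z) := by
    refine .single ⟨⟨t, ht, rfl⟩, ?_⟩
    rwa [length_eq_of_cen_eq cs act h0 h1 h2 hcen hm hz,
      length_eq_of_cen_eq cs act h0 h1 h2 hcen (hp.isAlcoveIndex hm) htz]
  rcases bruhatLE_of_le (hp.isAlcoveIndex hm) htz hp₀ hn hz' hn₀ hp₁ hp₂ with h | h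
  · exact .inr (h ▸ hstep)
  · exact .inr (hstep.trans h)
termination_by (n₁ + n₂ + 2 * n₃ - (m₁ + m₂ + 2 * m₃)).toNat
decreasing_by omega

end BruhatOrder

theorem statement5_general
    {W : Type*} [Group W] {M : CoxeterMatrix (Fin 3)} (cs : CoxeterSystem M W)
    (act : W →* Equiv.Perm E2)
    (h0 : ∀ v, act (cs.simple 0) v = reflE rho2 (-1) v)
    (h1 : ∀ v, act (cs.simple 1) v = reflE a1 0 v)
    (h2 : ∀ v, act (cs.simple 2) v = reflE a2 0 v)
    (hcen : Function.Injective (cen act))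
    (z z' : W) (hz : cen act z ∈ Fid) (hz' : cen act z' ∈ Fid) :
    bruhatLE cs z z' ↔
      0 ≤ B2 fw1 (cen act z' - cen act z) ∧ 0 ≤ B2 fw2 (cen act z' - cen act z) := by
  obtain ⟨m₁, m₂, m₃, hm, hzm⟩ := exists_isAlcoveIndex_cen_eq cs act h0 h1 h2 z
  obtain ⟨n₁, n₂, n₃, hn, hzn⟩ := exists_isAlcoveIndex_cen_eq cs act h0 h1 h2 z'
  have hm₀ := hm.nonneg_of_barycenter_mem_Fid (hzm ▸ hz)
  have hn₀ := hn.nonneg_of_barycenter_mem_Fid (hzn ▸ hz')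
  rw [hzm, hzn, B2_fw1_sub_barycenter_nonneg_iff, B2_fw2_sub_barycenter_nonneg_iff]
  constructor
  · intro h
    have hpot := potential_le_of_bruhatLE cs act h0 h1 h2 hcen h hm hzm hn hzn
    rwa [hm.potential_of_nonneg hm₀.1 hm₀.2.2, hn.potential_of_nonneg hn₀.1 hn₀.2.2,
      hm.swap.potential_of_nonneg hm₀.2.1 hm₀.2.2, hn.swap.potential_of_nonneg hn₀.2.1 hn₀.2.2]
      at hpot
  · rintro ⟨h₁, h₂⟩
    exact bruhatLE_of_le cs act h0 h1 h2 hcen hm hzm hm₀ hn hzn hn₀ h₁ h₂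

/-- local description of the Bruhat order in the zone `F_id`. -/
theorem statement5
    {W : Type*} [Group W] {M : CoxeterMatrix (Fin 3)} (cs : CoxeterSystem M W)
    (hM : ∀ i j : Fin 3, M i j = if i = j then 1 else 3)
    (act : W →* Equiv.Perm E2)
    (h0 : ∀ v, act (cs.simple 0) v = reflE rho2 (-1) v)
    (h1 : ∀ v, act (cs.simple 1) v = reflE a1 0 v)
    (h2 : ∀ v, act (cs.simple 2) v = reflE a2 0 v)
    (hcen : Function.Injective (cen act))
    (z z' : W) (hz : cen act z ∈ Fid) (hz' : cen act z' ∈ Fid) :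
    bruhatLE cs z z' ↔
      0 ≤ B2 fw1 (cen act z' - cen act z) ∧ 0 ≤ B2 fw2 (cen act z' - cen act z) :=
  statement5_general cs act h0 h1 h2 hcen z z' hz hz'
end
end
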